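/- arXiv:1407.8336 — 2 statements merged into one kernel-verified Lean document; each statement's English description precedes it below -/
import Mathlib

section
/- Let G be a finite simple connected graph of order 10 with maximum degree at most 4 and minimum degree exactly 3, which is not isomorphic to C₅², such that the set of vertices of degree 3 is an independent set and no vertex of degree 3 is contained in a triangle. Then ν_s(G) ≥ 2. -/
/-!
Suppose `ν_s(G) ≤ 1`, i.e. any two disjoint edges are joined by an edge. Take `v` of degree 3;
its neighbours `a, b, c` are pairwise non-adjacent and of degree 4, so each has exactly three
outer neighbours among the six vertices at distance two from `v`. Applying the hypothesis to
the edge `vp` shows that a vertex at distance two that misses `p` has all its neighbours at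
distance two inside the outer neighbourhood of `p`; with the degree bounds this gives that
every vertex at distance two sees one of `a, b, c`, and that any two of the outer
neighbourhoods `A, B, C` share at least two vertices. Then `|A ∪ B ∪ C| ≤ 9 - 2 - 2 < 6`.
-/

open SimpleGraph

universe u

/-- The graph obtained from a 5-cycle by blowing up each vertex into an
independent set of size 2: parts indexed by `ZMod 5`, consecutive parts
completely joined. -/
def C5Sq : SimpleGraph (ZMod 5 × Fin 2) :=
  SimpleGraph.fromRel (fun a b => a.1 = b.1 + 1)

/-- `M` is an induced matching of `G`: a set of edges of `G` such that no two
edges of `M` share an endpoint and no edge of `G` joins endpoints of two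
distinct edges of `M`. -/
def IsInducedMatching {V : Type*} (G : SimpleGraph V) (M : Finset (Sym2 V)) : Prop :=
  (M : Set (Sym2 V)) ⊆ G.edgeSet ∧
    ∀ e ∈ M, ∀ f ∈ M, e ≠ f → ∀ a ∈ e, ∀ b ∈ f, a ≠ b ∧ ¬ G.Adj a b

/-- The strong (induced) matching number of `G`. -/
noncomputable def strongMatchingNumber {V : Type*} (G : SimpleGraph V) : ℕ :=
  sSup {k | ∃ M : Finset (Sym2 V), IsInducedMatching G M ∧ M.card = k}

/-- The degree of a vertex. -/
noncomputable def deg {V : Type*} (G : SimpleGraph V) (v : V) : ℕ :=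
  (G.neighborSet v).ncard

/-- The number of isolated vertices of `G`. -/
noncomputable def numIsolated {V : Type*} (G : SimpleGraph V) : ℕ :=
  {v : V | ∀ w, ¬ G.Adj v w}.ncard

/-- The number of connected components of `G` isomorphic to `C5Sq`. -/
noncomputable def numC5SqComponents {V : Type*} (G : SimpleGraph V) : ℕ :=
  {c : G.ConnectedComponent | Nonempty (G.induce c.supp ≃g C5Sq)}.ncard

/-- `G` is a minimum counterexample: connected, maximum degree at most 4,
no isolated vertices, not isomorphic to `C5Sq`, with `9·ν_s(G) < n(G)`,
while every graph of smaller order and maximum degree at most 4 satisfies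
`9·ν_s(H) ≥ n(H) − i(H) − n₅(H)`. -/
def MinCounterexample {V : Type u} [Fintype V] (G : SimpleGraph V) : Prop :=
  G.Connected ∧ (∀ v, deg G v ≤ 4) ∧ (∀ v, ∃ w, G.Adj v w) ∧
    IsEmpty (G ≃g C5Sq) ∧
    9 * strongMatchingNumber G < Fintype.card V ∧
    ∀ (W : Type u) [Fintype W] (H : SimpleGraph W),
      Fintype.card W < Fintype.card V → (∀ w, deg H w ≤ 4) →
      (Fintype.card W : ℤ) - numIsolated H - numC5SqComponents H ≤
        9 * strongMatchingNumber H

open Finset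

lemma deg_eq_degree {V : Type*} [Fintype V] (G : SimpleGraph V) [DecidableRel G.Adj] (v : V) :
    deg G v = G.degree v := by
  rw [deg, ← Nat.card_coe_set_eq, Nat.card_eq_fintype_card, card_neighborSet_eq_degree]

lemma card_union_add_card_inter_add_card_inter_le {α : Type*} [DecidableEq α]
    (s t u : Finset α) : #(s ∪ t ∪ u) + #(s ∩ t) + #(s ∩ u) ≤ #s + #t + #u := by
  have hst := card_union_add_card_inter s t
  have hstu := card_union_add_card_inter (s ∪ t) u
  have hsu : #(s ∩ u) ≤ #((s ∪ t) ∩ u) :=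
    card_le_card (inter_subset_inter_right subset_union_left)
  omega

section StrongMatching

variable {V : Type*} [Fintype V] {G : SimpleGraph V}

lemma two_le_strongMatchingNumber {x₁ x₂ y₁ y₂ : V} (hx : G.Adj x₁ x₂)
    (hy : G.Adj y₁ y₂)
    (hsep : ∀ a ∈ s(x₁, x₂), ∀ b ∈ s(y₁, y₂), a ≠ b ∧ ¬ G.Adj a b) :
    2 ≤ strongMatchingNumber G := by
  classical
  have hne : s(x₁, x₂) ≠ s(y₁, y₂) := fun h =>
    (hsep x₁ (Sym2.mem_mk_left _ _) x₁ (h ▸ Sym2.mem_mk_left _ _)).1 rfl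
  refine le_csSup ⟨Fintype.card (Sym2 V), ?_⟩
    ⟨{s(x₁, x₂), s(y₁, y₂)}, ⟨?_, ?_⟩, card_pair hne⟩
  · rintro k ⟨M, -, rfl⟩
    exact card_le_univ M
  · simp [Set.insert_subset_iff, hx, hy]
  · simp only [mem_insert, mem_singleton]
    rintro e (rfl | rfl) f (rfl | rfl) hef a ha b hb
    · exact absurd rfl hef
    · exact hsep a ha b hb
    · exact ⟨(hsep b hb a ha).1.symm, fun h => (hsep b hb a ha).2 h.symm⟩
    · exact absurd rfl hef

lemma adj_or_adj_of_strongMatchingNumber_lt_two (hG : strongMatchingNumber G < 2)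
    {p q x y : V} (hpq : G.Adj p q) (hxy : G.Adj x y) (hpx : p ≠ x) (hqx : q ≠ x)
    (hpx' : ¬ G.Adj p x) (hqx' : ¬ G.Adj q x) : G.Adj p y ∨ G.Adj q y := by
  by_contra! h
  refine hG.not_ge (two_le_strongMatchingNumber hpq hxy ?_)
  simp only [Sym2.mem_iff]
  rintro a (rfl | rfl) b (rfl | rfl)
  · exact ⟨hpx, hpx'⟩
  · exact ⟨fun hay => hpx' (hay ▸ hxy.symm), h.1⟩
  · exact ⟨hqx, hqx'⟩
  · exact ⟨fun hay => hqx' (hay ▸ hxy.symm), h.2⟩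

lemma adj_of_strongMatchingNumber_lt_two (hG : strongMatchingNumber G < 2)
    {p q x y : V} (hpx : G.Adj p x) (hqy : G.Adj q y) (hpq : ¬ G.Adj p q)
    (hpy : ¬ G.Adj p y) (hqx : ¬ G.Adj q x) : G.Adj x y := by
  by_contra hxy
  rcases adj_or_adj_of_strongMatchingNumber_lt_two hG hqy hpx.symm
      (by rintro rfl; exact hpq hpx) (by rintro rfl; exact hpy hpx) hqx
      (fun h => hxy h.symm) with h | h
  · exact hpq h.symm
  · exact hpy h.symm

end StrongMatching

section Configuration

/- `Gᶜ.neighborFinset v` is the set of vertices at distance at least two from `v`, and for a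
neighbour `p` of `v`, `G.neighborFinset p ∩ Gᶜ.neighborFinset v` is the set of outer
neighbours of `p`. -/

variable {V : Type*} [Fintype V] [DecidableEq V] {G : SimpleGraph V} [DecidableRel G.Adj]
  {v : V}

lemma degree_eq_card_inter_add_card_inter {x : V} (hx : x ∈ Gᶜ.neighborFinset v) :
    G.degree x = #(G.neighborFinset x ∩ G.neighborFinset v) +
      #(G.neighborFinset x ∩ Gᶜ.neighborFinset v) := by
  rw [← card_neighborFinset_eq_degree, ← card_inter_add_card_sdiff _ (G.neighborFinset v)]
  congr 2
  ext y
  simp only [mem_neighborFinset, compl_adj] at hx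
  simp only [mem_sdiff, mem_inter, mem_neighborFinset, compl_adj]
  exact ⟨fun h => ⟨h.1, by rintro rfl; exact hx.2 h.1.symm, h.2⟩, fun h => ⟨h.1, h.2.2⟩⟩

lemma card_inter_compl_neighborFinset_add_one {p : V} (hp : G.Adj v p)
    (hind : ∀ s, G.Adj v s → ¬ G.Adj p s) :
    #(G.neighborFinset p ∩ Gᶜ.neighborFinset v) + 1 = G.degree p := by
  have : G.neighborFinset p ∩ Gᶜ.neighborFinset v = (G.neighborFinset p).erase v := by
    ext y
    simp only [mem_inter, mem_erase, mem_neighborFinset, compl_adj]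
    exact ⟨fun h => ⟨h.2.1.symm, h.1⟩,
      fun h => ⟨h.2, h.1.symm, fun hvy => hind y hvy h.2⟩⟩
  rw [this, card_erase_add_one (by simpa using hp.symm), card_neighborFinset_eq_degree]

lemma neighborFinset_inter_compl_subset (hG : strongMatchingNumber G < 2) {p x : V}
    (hp : G.Adj v p) (hx : x ∈ Gᶜ.neighborFinset v) (hpx : ¬ G.Adj p x) :
    G.neighborFinset x ∩ Gᶜ.neighborFinset v ⊆ G.neighborFinset p := by
  intro y hy
  simp only [mem_inter, mem_neighborFinset, compl_adj] at hx hy ⊢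
  exact (adj_or_adj_of_strongMatchingNumber_lt_two hG hp hy.1 hx.1
    (by rintro rfl; exact hx.2 hp) hx.2 hpx).resolve_left hy.2.2

lemma neighborFinset_eq_of_forall_not_adj (hG : strongMatchingNumber G < 2) {p x : V}
    (hp : G.Adj v p) (hp3 : #(G.neighborFinset p ∩ Gᶜ.neighborFinset v) = 3)
    (hx : x ∈ Gᶜ.neighborFinset v) (hx3 : 3 ≤ G.degree x)
    (hxv : ∀ s, G.Adj v s → ¬ G.Adj s x) :
    G.neighborFinset x = G.neighborFinset p ∩ Gᶜ.neighborFinset v := by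
  have hsub : G.neighborFinset x ⊆ G.neighborFinset p ∩ Gᶜ.neighborFinset v := by
    intro y hy
    have hyO : y ∈ Gᶜ.neighborFinset v := by
      simp only [mem_neighborFinset, compl_adj] at hx hy ⊢
      exact ⟨by rintro rfl; exact hx.2 hy.symm, fun hvy => hxv y hvy hy.symm⟩
    exact mem_inter.2
      ⟨neighborFinset_inter_compl_subset hG hp hx (hxv p hp) (mem_inter.2 ⟨hy, hyO⟩), hyO⟩
  refine eq_of_subset_of_card_le hsub ?_
  rwa [hp3, card_neighborFinset_eq_degree]

/-- If `x` sees no neighbour of `v`, its neighbourhood is the outer neighbourhood of each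
neighbour of `v`; so is that of a second vertex `x'` at distance two outside it, and a common
neighbour of `x` and `x'` is then adjacent to `x`, `x'` and all three neighbours of `v`. -/
lemma exists_adj_adj_of_mem_compl_neighborFinset (hG : strongMatchingNumber G < 2)
    (hδ : ∀ x, 3 ≤ G.degree x) (hΔ : ∀ x, G.degree x ≤ 4) (hv : G.degree v = 3)
    (hO : #(Gᶜ.neighborFinset v) = 6)
    (hout : ∀ s, G.Adj v s → #(G.neighborFinset s ∩ Gᶜ.neighborFinset v) = 3)
    {x : V} (hx : x ∈ Gᶜ.neighborFinset v) :
    ∃ s, G.Adj v s ∧ G.Adj s x := by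
  by_contra! hxv
  have hNx : ∀ s, G.Adj v s →
      G.neighborFinset x = G.neighborFinset s ∩ Gᶜ.neighborFinset v := fun s hs =>
    neighborFinset_eq_of_forall_not_adj hG hs (hout s hs) hx (hδ x) hxv
  obtain ⟨p, hp⟩ : (G.neighborFinset v).Nonempty := by
    rw [← card_pos, card_neighborFinset_eq_degree, hv]; norm_num
  rw [mem_neighborFinset] at hp
  obtain ⟨x', hx', hx'x⟩ : ∃ x' ∈ Gᶜ.neighborFinset v \ G.neighborFinset p, x' ≠ x := by
    refine exists_mem_ne ?_ x
    have := card_sdiff_add_card_inter (Gᶜ.neighborFinset v) (G.neighborFinset p)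
    rw [inter_comm, hO, hout p hp] at this
    omega
  rw [mem_sdiff] at hx'
  have hx'v : ∀ s, G.Adj v s → ¬ G.Adj s x' := by
    intro s hs hsx'
    have : x' ∈ G.neighborFinset p ∩ Gᶜ.neighborFinset v := by
      rw [← hNx p hp, hNx s hs]
      exact mem_inter.2 ⟨by simpa using hsx', hx'.1⟩
    exact hx'.2 (mem_of_mem_inter_left this)
  have hNx' := neighborFinset_eq_of_forall_not_adj hG hp (hout p hp) hx'.1 (hδ x') hx'v
  obtain ⟨y, hy⟩ : (G.neighborFinset x).Nonempty := by
    rw [← card_pos, card_neighborFinset_eq_degree]; linarith [hδ x]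
  have hys : ∀ s, G.Adj v s → G.Adj s y ∧ y ∈ Gᶜ.neighborFinset v := fun s hs => by
    simpa [hNx s hs] using hy
  have hv' : G.neighborFinset y ∩ G.neighborFinset v = G.neighborFinset v :=
    inter_eq_right.2 fun s hs => by simpa using ((hys s (by simpa using hs)).1.symm)
  have hxx' : {x, x'} ⊆ G.neighborFinset y ∩ Gᶜ.neighborFinset v := by
    intro w hw
    rcases mem_insert.1 hw with rfl | hw
    · exact mem_inter.2 ⟨by simpa [adj_comm] using hy, hx⟩
    · rw [mem_singleton.1 hw]
      refine mem_inter.2 ⟨?_, hx'.1⟩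
      have : y ∈ G.neighborFinset x' := by rw [hNx', ← hNx p hp]; exact hy
      simpa [adj_comm] using this
  have := card_le_card hxx'
  rw [card_pair hx'x.symm] at this
  have := degree_eq_card_inter_add_card_inter (hys p hp).2
  rw [hv', card_neighborFinset_eq_degree, hv] at this
  linarith [hΔ y]

/-- If `p` and `r` have no common outer neighbour, then a common outer neighbour `z` of `p` and
`q` is adjacent to all three outer neighbours `y` of `r` (the edges `pz` and `ry` must be
joined), so `z` has degree five. -/
lemma not_disjoint_of_adj_adj (hG : strongMatchingNumber G < 2)
    (hΔ : ∀ x, G.degree x ≤ 4) (hind : ∀ s t, G.Adj v s → G.Adj v t → ¬ G.Adj s t)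
    {p q r z : V} (hp : G.Adj v p) (hq : G.Adj v q) (hr : G.Adj v r) (hpq : p ≠ q)
    (hr3 : #(G.neighborFinset r ∩ Gᶜ.neighborFinset v) = 3)
    (hz : z ∈ Gᶜ.neighborFinset v) (hpz : G.Adj p z) (hqz : G.Adj q z) :
    ¬ Disjoint (G.neighborFinset p ∩ Gᶜ.neighborFinset v)
      (G.neighborFinset r ∩ Gᶜ.neighborFinset v) := by
  intro hPR
  have hnotR : ∀ y ∈ Gᶜ.neighborFinset v, G.Adj p y → ¬ G.Adj r y := fun y hy hpy hry =>
    disjoint_left.1 hPR (mem_inter.2 ⟨by simpa using hpy, hy⟩)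
      (mem_inter.2 ⟨by simpa using hry, hy⟩)
  have h2 : #{p, q} ≤ #(G.neighborFinset z ∩ G.neighborFinset v) := by
    refine card_le_card fun s hs => ?_
    rcases mem_insert.1 hs with rfl | hs
    · simp [hpz.symm, hp]
    · simp [mem_singleton.1 hs, hqz.symm, hq]
  have h3 : G.neighborFinset r ∩ Gᶜ.neighborFinset v ⊆
      G.neighborFinset z ∩ Gᶜ.neighborFinset v := by
    intro y hy
    obtain ⟨hry, hyO⟩ := mem_inter.1 hy
    rw [mem_neighborFinset] at hry
    refine mem_inter.2 ⟨?_, hyO⟩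
    have := adj_of_strongMatchingNumber_lt_two hG hpz hry (hind p r hp hr)
      (fun hpy => hnotR y hyO hpy hry) (hnotR z hz hpz)
    simpa using this
  have := degree_eq_card_inter_add_card_inter hz
  rw [card_pair hpq] at h2
  linarith [card_le_card h3, hΔ z]

lemma exists_not_adj_not_adj (hG : strongMatchingNumber G < 2) (hΔ : ∀ x, G.degree x ≤ 4)
    (hv : G.degree v = 3) (hO : #(Gᶜ.neighborFinset v) = 6)
    (hind : ∀ s t, G.Adj v s → G.Adj v t → ¬ G.Adj s t)
    (hout : ∀ s, G.Adj v s → #(G.neighborFinset s ∩ Gᶜ.neighborFinset v) = 3)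
    {p r : V} (hp : G.Adj v p) (hr : G.Adj v r) (hpr : p ≠ r) :
    ∃ x ∈ Gᶜ.neighborFinset v, ¬ G.Adj p x ∧ ¬ G.Adj r x := by
  by_contra! hcov
  have hPR : Disjoint (G.neighborFinset p ∩ Gᶜ.neighborFinset v)
      (G.neighborFinset r ∩ Gᶜ.neighborFinset v) := by
    have hsub : Gᶜ.neighborFinset v ⊆ G.neighborFinset p ∩ Gᶜ.neighborFinset v ∪
        G.neighborFinset r ∩ Gᶜ.neighborFinset v := by
      intro x hx
      by_cases hpx : G.Adj p x
      · exact mem_union_left _ (mem_inter.2 ⟨by simpa using hpx, hx⟩)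
      · exact mem_union_right _ (mem_inter.2 ⟨by simpa using hcov x hx hpx, hx⟩)
    have := card_union_add_card_inter (G.neighborFinset p ∩ Gᶜ.neighborFinset v)
      (G.neighborFinset r ∩ Gᶜ.neighborFinset v)
    rw [disjoint_iff_inter_eq_empty, ← card_eq_zero]
    linarith [card_le_card hsub, hout p hp, hout r hr]
  obtain ⟨q, hq, hqpr⟩ : ∃ q ∈ G.neighborFinset v, q ∉ ({p, r} : Finset V) := by
    refine exists_mem_notMem_of_card_lt_card ?_
    rw [card_pair hpr, card_neighborFinset_eq_degree, hv]
    norm_num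
  rw [mem_neighborFinset] at hq
  simp only [mem_insert, mem_singleton, not_or] at hqpr
  obtain ⟨z, hz⟩ : (G.neighborFinset q ∩ Gᶜ.neighborFinset v).Nonempty := by
    rw [← card_pos, hout q hq]; norm_num
  obtain ⟨hqz, hzO⟩ := mem_inter.1 hz
  rw [mem_neighborFinset] at hqz
  by_cases hpz : G.Adj p z
  · exact not_disjoint_of_adj_adj hG hΔ hind hp hq hr (Ne.symm hqpr.1) (hout r hr) hzO hpz
      hqz hPR
  · exact not_disjoint_of_adj_adj hG hΔ hind hr hq hp (Ne.symm hqpr.2) (hout p hp) hzO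
      (hcov z hzO hpz) hqz hPR.symm

/-- A vertex at distance two from `v` that misses `p` and `r` has at most one neighbour
adjacent to `v`, and all its other neighbours are common outer neighbours of `p` and `r`. -/
lemma two_le_card_outer_inter (hG : strongMatchingNumber G < 2) (hδ : ∀ x, 3 ≤ G.degree x)
    (hΔ : ∀ x, G.degree x ≤ 4) (hv : G.degree v = 3) (hO : #(Gᶜ.neighborFinset v) = 6)
    (hind : ∀ s t, G.Adj v s → G.Adj v t → ¬ G.Adj s t)
    (hout : ∀ s, G.Adj v s → #(G.neighborFinset s ∩ Gᶜ.neighborFinset v) = 3)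
    {p r : V} (hp : G.Adj v p) (hr : G.Adj v r) (hpr : p ≠ r) :
    2 ≤ #((G.neighborFinset p ∩ Gᶜ.neighborFinset v) ∩
      (G.neighborFinset r ∩ Gᶜ.neighborFinset v)) := by
  obtain ⟨x, hx, hpx, hrx⟩ := exists_not_adj_not_adj hG hΔ hv hO hind hout hp hr hpr
  have h1 : #(G.neighborFinset x ∩ G.neighborFinset v) ≤ 1 := by
    have hsub : G.neighborFinset x ∩ G.neighborFinset v ⊆
        ((G.neighborFinset v).erase p).erase r := by
      intro s hs
      simp only [mem_inter, mem_neighborFinset] at hs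
      simp only [mem_erase, mem_neighborFinset]
      exact ⟨by rintro rfl; exact hrx hs.1.symm, by rintro rfl; exact hpx hs.1.symm, hs.2⟩
    have := card_le_card hsub
    rw [card_erase_of_mem (by simp [hr, Ne.symm hpr]), card_erase_of_mem (by simpa using hp),
      card_neighborFinset_eq_degree, hv] at this
    omega
  have h2 : G.neighborFinset x ∩ Gᶜ.neighborFinset v ⊆ (G.neighborFinset p ∩
      Gᶜ.neighborFinset v) ∩ (G.neighborFinset r ∩ Gᶜ.neighborFinset v) :=
    fun y hy => mem_inter.2
      ⟨mem_inter.2 ⟨neighborFinset_inter_compl_subset hG hp hx hpx hy, (mem_inter.1 hy).2⟩,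
        mem_inter.2 ⟨neighborFinset_inter_compl_subset hG hr hx hrx hy, (mem_inter.1 hy).2⟩⟩
  have := degree_eq_card_inter_add_card_inter hx
  linarith [card_le_card h2, hδ x]

end Configuration

theorem two_le_strongMatchingNumber_of_degree_eq_three {V : Type*} [Fintype V]
    [DecidableEq V] {G : SimpleGraph V} [DecidableRel G.Adj] {v : V}
    (hδ : ∀ x, 3 ≤ G.degree x) (hΔ : ∀ x, G.degree x ≤ 4) (hcard : Fintype.card V = 10)
    (hv : G.degree v = 3) (hind : ∀ s t, G.Adj v s → G.Adj v t → ¬ G.Adj s t)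
    (hdeg4 : ∀ s, G.Adj v s → G.degree s = 4) :
    2 ≤ strongMatchingNumber G := by
  by_contra! hG
  have hO : #(Gᶜ.neighborFinset v) = 6 := by
    rw [card_neighborFinset_eq_degree, degree_compl, hcard, hv]
  have hout : ∀ s, G.Adj v s → #(G.neighborFinset s ∩ Gᶜ.neighborFinset v) = 3 := by
    intro s hs
    have := card_inter_compl_neighborFinset_add_one hs (hind s · hs)
    rw [hdeg4 s hs] at this
    omega
  obtain ⟨a, b, c, hab, hac, -, hN⟩ :=
    card_eq_three.1 (hv ▸ card_neighborFinset_eq_degree G v)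
  have hadj : ∀ s, G.Adj v s ↔ s = a ∨ s = b ∨ s = c := fun s => by
    rw [← mem_neighborFinset, hN]; simp
  have ha := (hadj a).2 (by simp)
  have hb := (hadj b).2 (by simp)
  have hc := (hadj c).2 (by simp)
  have hcover : Gᶜ.neighborFinset v ⊆ G.neighborFinset a ∩ Gᶜ.neighborFinset v ∪
      G.neighborFinset b ∩ Gᶜ.neighborFinset v ∪
      G.neighborFinset c ∩ Gᶜ.neighborFinset v := by
    intro x hx
    obtain ⟨s, hs, hsx⟩ := exists_adj_adj_of_mem_compl_neighborFinset hG hδ hΔ hv hO hout hx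
    rcases (hadj s).1 hs with rfl | rfl | rfl <;> simp [hsx, hx]
  have := card_union_add_card_inter_add_card_inter_le
    (G.neighborFinset a ∩ Gᶜ.neighborFinset v) (G.neighborFinset b ∩ Gᶜ.neighborFinset v)
    (G.neighborFinset c ∩ Gᶜ.neighborFinset v)
  linarith [card_le_card hcover, two_le_card_outer_inter hG hδ hΔ hv hO hind hout ha hb hab,
    two_le_card_outer_inter hG hδ hΔ hv hO hind hout ha hc hac, hout a ha, hout b hb, hout c hc]

theorem stmt4_general {V : Type u} [Fintype V] (G : SimpleGraph V)
    (hcard : Fintype.card V = 10)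
    (hdeg : ∀ v, deg G v ≤ 4)
    (hmin : ∀ v, 3 ≤ deg G v) (hmin' : ∃ v, deg G v = 3)
    (hind : ∀ u w, deg G u = 3 → deg G w = 3 → ¬ G.Adj u w)
    (htri : ∀ v a b, deg G v = 3 → ¬ (G.Adj v a ∧ G.Adj v b ∧ G.Adj a b)) :
    2 ≤ strongMatchingNumber G := by
  classical
  simp only [deg_eq_degree] at hdeg hmin hmin' hind htri
  obtain ⟨v, hv⟩ := hmin'
  refine two_le_strongMatchingNumber_of_degree_eq_three hmin hdeg hcard hv
    (fun s t hs ht hst => htri v s t hv ⟨hs, ht, hst⟩) fun s hs => ?_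
  exact le_antisymm (hdeg s) ((hmin s).lt_of_ne fun h => hind v s hv h.symm hs)

/-- A connected graph of order 10 with maximum degree at most 4
and minimum degree exactly 3, not isomorphic to `C5Sq`, in which the set of
degree-3 vertices is independent and no degree-3 vertex lies in a triangle,
has strong matching number at least 2. -/
theorem stmt4 {V : Type u} [Fintype V] (G : SimpleGraph V)
    (hconn : G.Connected) (hcard : Fintype.card V = 10)
    (hdeg : ∀ v, deg G v ≤ 4)
    (hmin : ∀ v, 3 ≤ deg G v) (hmin' : ∃ v, deg G v = 3)
    (hnotC5 : IsEmpty (G ≃g C5Sq))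
    (hind : ∀ u w, deg G u = 3 → deg G w = 3 → ¬ G.Adj u w)
    (htri : ∀ v a b, deg G v = 3 → ¬ (G.Adj v a ∧ G.Adj v b ∧ G.Adj a b)) :
    2 ≤ strongMatchingNumber G :=
  stmt4_general G hcard hdeg hmin hmin' hind htri
end

section
/- If G is a minimum counterexample, then every vertex of G of degree at least 2 is adjacent to at least two vertices of degree at least 2. -/
open SimpleGraph

universe u

/-!
Suppose `v` has degree at least 2 but at most one neighbour `w` of degree at least 2; then `v`
has a pendant neighbour `u`. Delete the closed neighbourhood `N[v]` (at most 5 vertices). A vertex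
that becomes isolated was adjacent only to neighbours of `v`, all pendant except `w`, so it is a
neighbour of `w` other than `v`: at most 3 vertices become isolated. No component of `G - N[v]`
is `C₅²`: it would be 4-regular, hence a component of the connected graph `G`, which contains `v`.
Minimality gives `9 ν_s(G - N[v]) ≥ n - 8`, and the edge `uv` extends every induced matching of
`G - N[v]`, so `9 ν_s(G) ≥ n + 1`.
-/

section Degree

variable {V W : Type*} {G : SimpleGraph V}

lemma SimpleGraph.Iso.deg_eq {H : SimpleGraph W} (e : G ≃g H) (x : V) :
    deg G x = deg H (e x) := by
  rw [deg, deg, ← Nat.card_coe_set_eq, ← Nat.card_coe_set_eq]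
  exact Nat.card_congr (e.mapNeighborSet x)

instance : DecidableRel C5Sq.Adj := fun a b =>
  decidable_of_iff _ (fromRel_adj _ a b).symm

lemma deg_C5Sq (z : ZMod 5 × Fin 2) : deg C5Sq z = 4 := by
  rw [deg, Set.ncard_eq_toFinset_card']
  revert z
  decide

lemma deg_induce (S : Set V) (x : S) : deg (G.induce S) x = (G.neighborSet x ∩ S).ncard := by
  rw [deg, ← Set.ncard_image_of_injective _ Subtype.val_injective]
  congr 1
  ext y
  exact ⟨by rintro ⟨y, hy, rfl⟩; exact ⟨hy, y.2⟩,
    fun ⟨hy, hyS⟩ => ⟨⟨y, hyS⟩, hy, rfl⟩⟩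

lemma deg_induce_le [Finite V] (S : Set V) (x : S) : deg (G.induce S) x ≤ deg G x := by
  rw [deg_induce]
  exact Set.ncard_le_ncard Set.inter_subset_left

lemma neighborSet_subset_of_deg_induce_eq [Finite V] {S : Set V} {x : S}
    (h : deg (G.induce S) x = deg G x) : G.neighborSet x ⊆ S := by
  rw [deg_induce, deg] at h
  rw [← Set.eq_of_subset_of_ncard_le Set.inter_subset_left h.ge]
  exact Set.inter_subset_right

lemma eq_of_adj_of_deg_le_one [Finite V] {u v x : V} (hu : deg G u ≤ 1) (huv : G.Adj u v)
    (hux : G.Adj u x) : x = v := by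
  by_contra hxv
  have hpair : ({v, x} : Set V) ⊆ G.neighborSet u := Set.pair_subset huv hux
  have := Set.ncard_le_ncard hpair
  rw [Set.ncard_pair (Ne.symm hxv)] at this
  exact absurd (this.trans hu) (by norm_num)

end Degree

section InducedMatching

variable {V : Type*} {G : SimpleGraph V}

lemma bddAbove_card_inducedMatching [Finite V] :
    BddAbove {k | ∃ M : Finset (Sym2 V), IsInducedMatching G M ∧ M.card = k} :=
  (Set.finite_range Finset.card).bddAbove.mono (by rintro _ ⟨M, -, rfl⟩; exact ⟨M, rfl⟩)

lemma IsInducedMatching.card_le_strongMatchingNumber [Finite V] {M : Finset (Sym2 V)}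
    (hM : IsInducedMatching G M) : M.card ≤ strongMatchingNumber G :=
  le_csSup bddAbove_card_inducedMatching ⟨M, hM, rfl⟩

lemma exists_isInducedMatching_card_eq [Finite V] :
    ∃ M : Finset (Sym2 V), IsInducedMatching G M ∧ M.card = strongMatchingNumber G := by
  refine Nat.sSup_mem ?_ bddAbove_card_inducedMatching
  exact ⟨0, ∅, ⟨by simp, by simp⟩, rfl⟩

lemma IsInducedMatching.map_induce {S : Set V} {M : Finset (Sym2 S)}
    (hM : IsInducedMatching (G.induce S) M) :
    IsInducedMatching G (M.map (Function.Embedding.subtype (· ∈ S)).sym2Map) := by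
  refine ⟨?_, ?_⟩
  · intro _ he
    obtain ⟨e, heM, rfl⟩ := Finset.mem_map.1 he
    induction e using Sym2.ind with
    | h a b => exact hM.1 heM
  · intro _ he _ hf hef _ ha _ hb
    obtain ⟨e, heM, rfl⟩ := Finset.mem_map.1 he
    obtain ⟨f, hfM, rfl⟩ := Finset.mem_map.1 hf
    obtain ⟨a, hae, rfl⟩ := Sym2.mem_map.1 ha
    obtain ⟨b, hbf, rfl⟩ := Sym2.mem_map.1 hb
    obtain ⟨hab, hadj⟩ := hM.2 e heM f hfM (fun h => hef (h ▸ rfl)) a hae b hbf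
    exact ⟨Subtype.val_injective.ne hab, hadj⟩

lemma IsInducedMatching.insert [DecidableEq V] {M : Finset (Sym2 V)}
    (hM : IsInducedMatching G M) {d : Sym2 V} (hd : d ∈ G.edgeSet)
    (hfar : ∀ e ∈ M, ∀ x ∈ d, ∀ y ∈ e, x ≠ y ∧ ¬ G.Adj x y) :
    IsInducedMatching G (insert d M) := by
  refine ⟨?_, ?_⟩
  · rw [Finset.coe_insert]
    exact Set.insert_subset hd hM.1
  · intro e he f hf hef a ha b hb
    rcases Finset.mem_insert.1 he with rfl | heM <;> rcases Finset.mem_insert.1 hf with rfl | hfM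
    · exact absurd rfl hef
    · exact hfar f hfM a ha b hb
    · obtain ⟨hba, hadj⟩ := hfar e heM b hb a ha
      exact ⟨hba.symm, fun h => hadj h.symm⟩
    · exact hM.2 e heM f hfM hef a ha b hb

lemma strongMatchingNumber_induce_add_one_le [Finite V] {S : Set V} {d : Sym2 V}
    (hd : d ∈ G.edgeSet) (hfar : ∀ x ∈ d, x ∉ S ∧ ∀ y ∈ S, ¬ G.Adj x y) :
    strongMatchingNumber (G.induce S) + 1 ≤ strongMatchingNumber G := by
  classical
  obtain ⟨M, hM, hcard⟩ := exists_isInducedMatching_card_eq (G := G.induce S)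
  set M' := M.map (Function.Embedding.subtype (· ∈ S)).sym2Map
  have hfar' : ∀ e ∈ M', ∀ x ∈ d, ∀ y ∈ e, x ≠ y ∧ ¬ G.Adj x y := by
    intro e he x hx y hy
    obtain ⟨e, -, rfl⟩ := Finset.mem_map.1 he
    obtain ⟨y, -, rfl⟩ := Sym2.mem_map.1 hy
    exact ⟨fun h => (hfar x hx).1 (h ▸ y.2), (hfar x hx).2 y y.2⟩
  have hdM : d ∉ M' := fun h => (hfar' d h _ d.out_fst_mem _ d.out_fst_mem).1 rfl
  have := (hM.map_induce.insert hd hfar').card_le_strongMatchingNumber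
  rw [Finset.card_insert_of_notMem hdM, Finset.card_map] at this
  omega

end InducedMatching

section Components

variable {V : Type*} {G : SimpleGraph V}

lemma numC5SqComponents_induce_eq_zero [Finite V] (hconn : G.Connected)
    (hdeg : ∀ v, deg G v ≤ 4) {S : Set V} {v : V} (hv : v ∉ S) :
    numC5SqComponents (G.induce S) = 0 := by
  rw [numC5SqComponents, Set.ncard_eq_zero]
  refine Set.eq_empty_of_forall_notMem ?_
  rintro c ⟨e⟩
  -- `c` is 4-regular and `G` has maximum degree 4, so `c` is closed under `G`-adjacency.
  have hclosed : ∀ x ∈ c.supp, ∀ y, G.Adj x y → ∃ hy : y ∈ S, ⟨y, hy⟩ ∈ c.supp := by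
    intro x hx y hxy
    have h4 : deg (G.induce S |>.induce c.supp) ⟨x, hx⟩ = 4 := (e.deg_eq _).trans (deg_C5Sq _)
    have hle : 4 ≤ deg (G.induce S) x := h4 ▸ deg_induce_le c.supp ⟨x, hx⟩
    have hS : G.neighborSet x ⊆ S :=
      neighborSet_subset_of_deg_induce_eq ((deg_induce_le S x).antisymm (hle.trans' (hdeg x)))
    exact ⟨hS hxy, c.mem_supp_of_adj_mem_supp hx hxy⟩
  obtain ⟨x₀, hx₀⟩ : ∃ x, x ∈ c.supp := ⟨e.symm (0, 0), (e.symm (0, 0)).2⟩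
  obtain ⟨p⟩ := hconn.preconnected x₀ v
  obtain ⟨d, -, ⟨x, hx, hxd⟩, hd⟩ :=
    p.exists_boundary_dart (Subtype.val '' c.supp) ⟨x₀, hx₀, rfl⟩
      (by rintro ⟨y, -, rfl⟩; exact hv y.2)
  obtain ⟨hy, hyc⟩ := hclosed x hx d.snd (hxd ▸ d.adj)
  exact hd ⟨⟨d.snd, hy⟩, hyc, rfl⟩

end Components

section SparseNeighbourhood

variable {V : Type*} {G : SimpleGraph V}

lemma exists_adj_deg_le_one [Finite V] {v : V} (hv : 2 ≤ deg G v)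
    (hB : {w | G.Adj v w ∧ 2 ≤ deg G w}.ncard < 2) : ∃ u, G.Adj v u ∧ deg G u ≤ 1 := by
  by_contra! h
  have hsub : G.neighborSet v ⊆ {w | G.Adj v w ∧ 2 ≤ deg G w} := fun w hw => ⟨hw, h w hw⟩
  have := Set.ncard_le_ncard hsub
  rw [deg] at hv
  omega

lemma numIsolated_induce_le_ncard [Finite V] {S : Set V} {w : V}
    (h : ∀ x ∈ S, (∀ y ∈ S, ¬ G.Adj x y) → G.Adj w x) :
    numIsolated (G.induce S) ≤ (G.neighborSet w ∩ S).ncard := by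
  rw [numIsolated, ← Set.ncard_image_of_injective _ Subtype.val_injective]
  refine Set.ncard_le_ncard ?_
  rintro _ ⟨x, hx, rfl⟩
  exact ⟨h x x.2 fun y hy => hx ⟨y, hy⟩, x.2⟩

lemma ncard_neighborSet_inter_lt_deg [Finite V] {S : Set V} {v w : V} (hvw : G.Adj w v)
    (hv : v ∉ S) : (G.neighborSet w ∩ S).ncard < deg G w :=
  Set.ncard_lt_ncard (Set.inter_ssubset_left_iff.2 fun h => hv (h hvw))

lemma numIsolated_induce_compl_insert_neighborSet_le [Finite V] (hdeg : ∀ v, deg G v ≤ 4)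
    (hnoiso : ∀ v, ∃ w, G.Adj v w) {v : V} (hB : {w | G.Adj v w ∧ 2 ≤ deg G w}.ncard < 2) :
    numIsolated (G.induce (insert v (G.neighborSet v))ᶜ) ≤ 3 := by
  set S := (insert v (G.neighborSet v))ᶜ
  set B := {w | G.Adj v w ∧ 2 ≤ deg G w}
  have hiso : ∀ x ∈ S, (∀ y ∈ S, ¬ G.Adj x y) → ∃ w ∈ B, G.Adj w x := by
    intro x hx hxiso
    obtain ⟨y, hxy⟩ := hnoiso x
    have hyS : y ∈ insert v (G.neighborSet v) := not_not.1 fun hy => hxiso y hy hxy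
    have hyv : y ≠ v := by rintro rfl; exact hx (Set.mem_insert_of_mem _ hxy.symm)
    have hvy : G.Adj v y := (Set.mem_insert_iff.1 hyS).resolve_left hyv
    refine ⟨y, ⟨hvy, ?_⟩, hxy.symm⟩
    by_contra! hy
    have hxv : x = v := eq_of_adj_of_deg_le_one (Nat.lt_succ_iff.1 hy) hvy.symm hxy.symm
    exact hx (hxv ▸ Set.mem_insert _ _)
  rcases (Set.ncard_le_one_iff_eq (s := B)).1 (Nat.lt_succ_iff.1 hB) with hBe | ⟨w, hBw⟩
  · have hnone : {x : S | ∀ y, ¬ (G.induce S).Adj x y} = ∅ :=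
      Set.eq_empty_of_forall_notMem fun x hx => by
        obtain ⟨w, hw, -⟩ := hiso x x.2 fun y hy => hx ⟨y, hy⟩
        exact hBe.subset hw
    rw [numIsolated, hnone, Set.ncard_empty]
    norm_num
  · have hw : w ∈ B := hBw ▸ rfl
    have := numIsolated_induce_le_ncard (S := S) (w := w) fun x hx hxiso => by
      obtain ⟨y, hy, hyx⟩ := hiso x hx hxiso
      exact (hBw.subset hy : y = w) ▸ hyx
    have := ncard_neighborSet_inter_lt_deg (S := S) hw.1.symm fun h => h (Set.mem_insert v _)
    have := hdeg w
    omega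

lemma card_le_ncard_compl_insert_neighborSet [Fintype V] (v : V) :
    Fintype.card V ≤ (insert v (G.neighborSet v))ᶜ.ncard + deg G v + 1 := by
  rw [← Nat.card_eq_fintype_card, deg, ← Set.ncard_add_ncard_compl (insert v (G.neighborSet v))]
  have := Set.ncard_insert_le v (G.neighborSet v)
  omega

end SparseNeighbourhood

/-- In a minimum counterexample, every vertex of degree at
least 2 is adjacent to at least two vertices of degree at least 2. -/
theorem stmt5 {V : Type u} [Fintype V] (G : SimpleGraph V)
    (hG : MinCounterexample G) :
    ∀ v, 2 ≤ deg G v → 2 ≤ {w | G.Adj v w ∧ 2 ≤ deg G w}.ncard := by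
  classical
  obtain ⟨hconn, hdeg, hnoiso, -, hlt, hmin⟩ := hG
  intro v hv
  by_contra! hB
  obtain ⟨u, hvu, hu⟩ := exists_adj_deg_le_one hv hB
  have hcard := card_le_ncard_compl_insert_neighborSet (G := G) v
  have hiso := numIsolated_induce_compl_insert_neighborSet_le hdeg hnoiso hB
  set S := (insert v (G.neighborSet v))ᶜ
  have hvS : v ∉ S := fun h => h (Set.mem_insert v _)
  have hfar : ∀ x ∈ s(v, u), x ∉ S ∧ ∀ y ∈ S, ¬ G.Adj x y := by
    intro x hx
    rcases Sym2.mem_iff.1 hx with rfl | rfl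
    · exact ⟨hvS, fun y hy hxy => hy (Set.mem_insert_of_mem _ hxy)⟩
    · exact ⟨fun h => h (Set.mem_insert_of_mem _ hvu),
        fun y hy hxy => hvS (eq_of_adj_of_deg_le_one hu hvu.symm hxy ▸ hy)⟩
  have hC5 := numC5SqComponents_induce_eq_zero hconn hdeg hvS
  have hstep := strongMatchingNumber_induce_add_one_le (G.mem_edgeSet.2 hvu) hfar
  have hcardS : Fintype.card S = S.ncard := by
    rw [← Nat.card_eq_fintype_card, Nat.card_coe_set_eq]
  have hSV : Fintype.card S < Fintype.card V := by
    simpa only [Nat.card_eq_fintype_card] using Finite.card_subtype_lt hvS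
  have := hdeg v
  have := hmin S (G.induce S) hSV fun x => (deg_induce_le S x).trans (hdeg x)
  omega
end
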